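/- Recursion operator property is inherited by first-order perturbation: suppose Φ : V → End(V) and K : V → V are smooth and Φ is a recursion operator of u_t = K(u), meaning Φ'(u)[K(u)]S − K'(u)[Φ(u)S] + Φ(u)K'(u)[S] = 0 for all u, S. Then Φ̂(η_0,η_1) = [[Φ(η_0),0],[Φ'(η_0)[η_1],Φ(η_0)]] is a recursion operator of the first-order perturbation system η_{0t}=K(η_0), η_{1t}=K'(η_0)[η_1], i.e. Φ̂'(η̂)[K̂(η̂)]Ŝ − K̂'(η̂)[Φ̂(η̂)Ŝ] + Φ̂(η̂)K̂'(η̂)[Ŝ] = 0 for all η̂=(η_0,η_1) and Ŝ=(S_0,S_1). -/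

import Mathlib

set_option maxHeartbeats 1000000
variable {E : Type*} [NormedAddCommGroup E] [NormedSpace ℝ E]

/-- `Φ` is a (time-independent) recursion operator of `u_t = K(u)`:
`Φ'(u)[K(u)]S − K'(u)[Φ(u)S] + Φ(u)K'(u)[S] = 0` for all `u, S`. -/
def IsRecursionOp {F : Type*} [NormedAddCommGroup F] [NormedSpace ℝ F]
    (Φ : F → F →L[ℝ] F) (K : F → F) : Prop :=
  ∀ u S : F,
    fderiv ℝ Φ u (K u) S - fderiv ℝ K u (Φ u S) + Φ u (fderiv ℝ K u S) = 0

/-- The first-order perturbation operator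
`Φ̂(η₀,η₁) = [[Φ(η₀), 0], [Φ'(η₀)[η₁], Φ(η₀)]]` on `E × E`. -/
noncomputable def perturb1Op (Φ : E → E →L[ℝ] E) (η : E × E) :
    (E × E) →L[ℝ] (E × E) :=
  ((Φ η.1).comp (ContinuousLinearMap.fst ℝ E E)).prod
    (((fderiv ℝ Φ η.1 η.2).comp (ContinuousLinearMap.fst ℝ E E)) +
      (Φ η.1).comp (ContinuousLinearMap.snd ℝ E E))

/-- The first-order perturbation vector field
`K̂(η₀,η₁) = (K(η₀), K'(η₀)[η₁])`. -/
noncomputable def perturb1VF (K : E → E) (η : E × E) : E × E :=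
  (K η.1, fderiv ℝ K η.1 η.2)

open ContinuousLinearMap in
/-- Differentiating the recursion identity in direction `w`. -/
theorem recursion_deriv_aux (Φ : E → E →L[ℝ] E) (K : E → E)
    (hΦ1 : ∀ u, HasFDerivAt Φ (fderiv ℝ Φ u) u)
    (hΦ2 : ∀ u, HasFDerivAt (fderiv ℝ Φ) (fderiv ℝ (fderiv ℝ Φ) u) u)
    (hK1 : ∀ u, HasFDerivAt K (fderiv ℝ K u) u)
    (hK2 : ∀ u, HasFDerivAt (fderiv ℝ K) (fderiv ℝ (fderiv ℝ K) u) u)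
    (hrec : IsRecursionOp Φ K) (u w S0 : E) :
    (fderiv ℝ Φ u (fderiv ℝ K u w) S0 + fderiv ℝ (fderiv ℝ Φ) u w (K u) S0)
      - (fderiv ℝ K u (fderiv ℝ Φ u w S0) + fderiv ℝ (fderiv ℝ K) u w (Φ u S0))
      + (fderiv ℝ Φ u w (fderiv ℝ K u S0) + Φ u (fderiv ℝ (fderiv ℝ K) u w S0)) = 0 := by
  have hg1 : HasFDerivAt (fun u => fderiv ℝ Φ u (K u) S0)
      ((fderiv ℝ Φ u (K u)).comp 0 +
        ((fderiv ℝ Φ u).comp (fderiv ℝ K u) + (fderiv ℝ (fderiv ℝ Φ) u).flip (K u)).flip S0) u :=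
    ((hΦ2 u).clm_apply (hK1 u)).clm_apply (hasFDerivAt_const S0 u)
  have hg2 : HasFDerivAt (fun u => fderiv ℝ K u (Φ u S0))
      ((fderiv ℝ K u).comp ((Φ u).comp 0 + (fderiv ℝ Φ u).flip S0) +
        (fderiv ℝ (fderiv ℝ K) u).flip (Φ u S0)) u :=
    (hK2 u).clm_apply ((hΦ1 u).clm_apply (hasFDerivAt_const S0 u))
  have hg3 : HasFDerivAt (fun u => Φ u (fderiv ℝ K u S0))
      ((Φ u).comp ((fderiv ℝ K u).comp 0 + (fderiv ℝ (fderiv ℝ K) u).flip S0) +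
        (fderiv ℝ Φ u).flip (fderiv ℝ K u S0)) u :=
    (hΦ1 u).clm_apply ((hK2 u).clm_apply (hasFDerivAt_const S0 u))
  have htot : HasFDerivAt (fun u => fderiv ℝ Φ u (K u) S0 - fderiv ℝ K u (Φ u S0) + Φ u (fderiv ℝ K u S0)) _ u :=
    (hg1.sub hg2).add hg3
  have hzero : (fun u => fderiv ℝ Φ u (K u) S0 - fderiv ℝ K u (Φ u S0) + Φ u (fderiv ℝ K u S0))
      = fun _ : E => (0 : E) := funext fun u => hrec u S0
  rw [hzero] at htot
  have h0 := htot.unique (hasFDerivAt_const 0 u)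
  have h1 := ContinuousLinearMap.ext_iff.mp h0 w
  simp only [ContinuousLinearMap.add_apply, ContinuousLinearMap.sub_apply,
    ContinuousLinearMap.comp_apply, ContinuousLinearMap.flip_apply,
    ContinuousLinearMap.zero_apply, ContinuousLinearMap.comp_zero, map_zero, zero_add,
    ContinuousLinearMap.coe_zero, Pi.zero_apply, map_add] at h1
  linear_combination (norm := abel1) h1

open ContinuousLinearMap in
/-- if `Φ` is a recursion operator of `u_t = K(u)`, then `Φ̂` is
a recursion operator of the first-order perturbation system
`η₀ₜ = K(η₀)`, `η₁ₜ = K'(η₀)[η₁]`. -/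
theorem stmt12 (Φ : E → E →L[ℝ] E) (K : E → E)
    (hΦ : ContDiff ℝ (⊤ : ℕ∞) Φ) (hK : ContDiff ℝ (⊤ : ℕ∞) K)
    (hrec : IsRecursionOp Φ K) :
    IsRecursionOp (perturb1Op Φ) (perturb1VF K) := by
  have dΦ : Differentiable ℝ Φ := hΦ.differentiable (by simp)
  have dΦ' : Differentiable ℝ (fderiv ℝ Φ) := (hΦ.fderiv_right (m := 1) (WithTop.coe_le_coe.mpr le_top)).differentiable one_ne_zero
  have dK : Differentiable ℝ K := hK.differentiable (by simp)
  have dK' : Differentiable ℝ (fderiv ℝ K) := (hK.fderiv_right (m := 1) (WithTop.coe_le_coe.mpr le_top)).differentiable one_ne_zero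
  have hΦ1 : ∀ u, HasFDerivAt Φ (fderiv ℝ Φ u) u := fun u => (dΦ u).hasFDerivAt
  have hΦ2 : ∀ u, HasFDerivAt (fderiv ℝ Φ) (fderiv ℝ (fderiv ℝ Φ) u) u :=
    fun u => (dΦ' u).hasFDerivAt
  have hK1 : ∀ u, HasFDerivAt K (fderiv ℝ K u) u := fun u => (dK u).hasFDerivAt
  have hK2 : ∀ u, HasFDerivAt (fderiv ℝ K) (fderiv ℝ (fderiv ℝ K) u) u :=
    fun u => (dK' u).hasFDerivAt
  have hsymΦ : ∀ u v w, fderiv ℝ (fderiv ℝ Φ) u v w = fderiv ℝ (fderiv ℝ Φ) u w v :=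
    fun u v w => second_derivative_symmetric hΦ1 (hΦ2 u) v w
  have hsymK : ∀ u v w, fderiv ℝ (fderiv ℝ K) u v w = fderiv ℝ (fderiv ℝ K) u w v :=
    fun u v w => second_derivative_symmetric hK1 (hK2 u) v w
  intro η S
  -- derivative of perturb1VF
  have hVF : HasFDerivAt (perturb1VF K)
      (((fderiv ℝ K η.1).comp (fst ℝ E E)).prod
        ((fderiv ℝ K η.1).comp (snd ℝ E E) +
          ((fderiv ℝ (fderiv ℝ K) η.1).comp (fst ℝ E E)).flip η.2)) η := by
    have h1 : HasFDerivAt (fun q : E × E => K q.1) ((fderiv ℝ K η.1).comp (fst ℝ E E)) η :=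
      (hK1 η.1).comp η hasFDerivAt_fst
    have h2 : HasFDerivAt (fun q : E × E => fderiv ℝ K q.1)
        ((fderiv ℝ (fderiv ℝ K) η.1).comp (fst ℝ E E)) η :=
      (hK2 η.1).comp η hasFDerivAt_fst
    exact h1.prodMk (h2.clm_apply hasFDerivAt_snd)
  -- derivative of perturb1Op
  set L1 : (E →L[ℝ] E) →L[ℝ] ((E × E) →L[ℝ] E) :=
    (compL ℝ (E × E) E E).flip (fst ℝ E E) with hL1
  set L2 : (E →L[ℝ] E) →L[ℝ] ((E × E) →L[ℝ] E) :=
    (compL ℝ (E × E) E E).flip (snd ℝ E E) with hL2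
  set Cinl : ((E × E) →L[ℝ] E) →L[ℝ] ((E × E) →L[ℝ] (E × E)) :=
    (compL ℝ (E × E) E (E × E)) (inl ℝ E E) with hCinl
  set Cinr : ((E × E) →L[ℝ] E) →L[ℝ] ((E × E) →L[ℝ] (E × E)) :=
    (compL ℝ (E × E) E (E × E)) (inr ℝ E E) with hCinr
  have hphi : HasFDerivAt (fun q : E × E => Φ q.1) ((fderiv ℝ Φ η.1).comp (fst ℝ E E)) η :=
    (hΦ1 η.1).comp η hasFDerivAt_fst
  have hphi' : HasFDerivAt (fun q : E × E => fderiv ℝ Φ q.1)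
      ((fderiv ℝ (fderiv ℝ Φ) η.1).comp (fst ℝ E E)) η :=
    by
    have h := HasFDerivAt.comp (g := fderiv ℝ Φ) (f := (Prod.fst : E × E → E)) η (hΦ2 η.1) (hasFDerivAt_fst (𝕜 := ℝ) (E := E) (F := E) (p := η))
    exact h
  have hA : HasFDerivAt (fun q : E × E => fderiv ℝ Φ q.1 q.2)
      ((fderiv ℝ Φ η.1).comp (snd ℝ E E) +
        ((fderiv ℝ (fderiv ℝ Φ) η.1).comp (fst ℝ E E)).flip η.2) η :=
    hphi'.clm_apply hasFDerivAt_snd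
  have hF : HasFDerivAt
      (fun q : E × E => Cinl (L1 (Φ q.1)) + Cinr (L1 (fderiv ℝ Φ q.1 q.2) + L2 (Φ q.1)))
      (Cinl.comp (L1.comp ((fderiv ℝ Φ η.1).comp (fst ℝ E E))) +
        Cinr.comp (L1.comp ((fderiv ℝ Φ η.1).comp (snd ℝ E E) +
            ((fderiv ℝ (fderiv ℝ Φ) η.1).comp (fst ℝ E E)).flip η.2) +
          L2.comp ((fderiv ℝ Φ η.1).comp (fst ℝ E E)))) η :=
    (Cinl.hasFDerivAt.comp η (L1.hasFDerivAt.comp η hphi)).add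
      (Cinr.hasFDerivAt.comp η ((L1.hasFDerivAt.comp η hA).add (L2.hasFDerivAt.comp η hphi)))
  have hEq : perturb1Op Φ = fun q : E × E =>
      Cinl (L1 (Φ q.1)) + Cinr (L1 (fderiv ℝ Φ q.1 q.2) + L2 (Φ q.1)) := by
    funext q; ext x <;> simp [perturb1Op, hL1, hL2, hCinl, hCinr]
  rw [hEq]
  rw [hF.fderiv, hVF.fderiv]
  have hI2 := recursion_deriv_aux Φ K hΦ1 hΦ2 hK1 hK2 hrec η.1 η.2 S.1
  have hr1 := hrec η.1 S.1
  have hr2 := hrec η.1 S.2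
  have SIMP : True := trivial
  refine Prod.ext ?_ ?_
  · simp only [perturb1Op, perturb1VF, hL1, hL2, hCinl, hCinr,
      ContinuousLinearMap.add_apply, ContinuousLinearMap.sub_apply,
      ContinuousLinearMap.comp_apply, ContinuousLinearMap.flip_apply,
      ContinuousLinearMap.prod_apply, ContinuousLinearMap.compL_apply,
      ContinuousLinearMap.coe_fst', ContinuousLinearMap.coe_snd',
      ContinuousLinearMap.inl_apply, ContinuousLinearMap.inr_apply,
      Prod.fst_sub, Prod.snd_sub, Prod.fst_add, Prod.snd_add, Prod.fst_zero, Prod.snd_zero,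
      map_add, add_zero, zero_add, map_zero]
    linear_combination (norm := abel1) hr1
  · simp only [perturb1Op, perturb1VF, hL1, hL2, hCinl, hCinr,
      ContinuousLinearMap.add_apply, ContinuousLinearMap.sub_apply,
      ContinuousLinearMap.comp_apply, ContinuousLinearMap.flip_apply,
      ContinuousLinearMap.prod_apply, ContinuousLinearMap.compL_apply,
      ContinuousLinearMap.coe_fst', ContinuousLinearMap.coe_snd',
      ContinuousLinearMap.inl_apply, ContinuousLinearMap.inr_apply,
      Prod.fst_sub, Prod.snd_sub, Prod.fst_add, Prod.snd_add, Prod.fst_zero, Prod.snd_zero,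
      map_add, add_zero, zero_add, map_zero]
    rw [hsymΦ η.1 (K η.1) η.2, hsymK η.1 (Φ η.1 S.1) η.2, hsymK η.1 S.1 η.2]
    simp only [ContinuousLinearMap.zero_apply, Pi.zero_apply, add_zero, zero_add, map_zero,
      ContinuousLinearMap.coe_zero]
    linear_combination (norm := abel1) hI2 + hr2
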